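/- Characteristic polynomial of the Rule 54 Gibbs transfer matrix: For all ξ, ω ∈ ℂ, the characteristic polynomial of the 3×3 matrix T(ξ,ω) = [[1+ξω, ω, ξ],[1+ξ, ξω, ξ],[1+ω, ω, ξω]] is det(λ·I₃ − T(ξ,ω)) = λ³ − (1 + 3ξω)λ² − (ξ + ω + ξω(1 − 3ξω))λ − ξω(1 − ξω)². Consequently, the partition sums Z_{2k} := trace(T(ξ,ω)^k) satisfy the linear recurrence Z_{2k+2} = (1 + 3ξω)·Z_{2k} + (ξ + ω + ξω(1 − 3ξω))·Z_{2k−2} + ξω(ξω − 1)²·Z_{2k−4} for all k ≥ 2. -/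

import Mathlib

/-!
Expanding `det (λ • 1 - T)` by the rule of Sarrus gives the cubic, hence the characteristic
polynomial of `T`. By Cayley–Hamilton `T³ = a T² + b T + c`, so
`T^(m+3) = a T^(m+2) + b T^(m+1) + c T^m`, and taking traces gives the recurrence.
-/

namespace Rule54

/-- The Rule 54 Gibbs transfer matrix `T(ξ,ω)`. -/
noncomputable def T3 (ξ ω : ℂ) : Matrix (Fin 3) (Fin 3) ℂ :=
  !![1 + ξ * ω, ω, ξ; 1 + ξ, ξ * ω, ξ; 1 + ω, ω, ξ * ω]

open Matrix Polynomial

section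
variable {n R : Type*} [Fintype n] [DecidableEq n] [CommRing R]

theorem pow_three_eq_of_charpoly_eq {A : Matrix n n R} {a b c : R}
    (h : A.charpoly = X ^ 3 - C a * X ^ 2 - C b * X - C c) :
    A ^ 3 = a • A ^ 2 + b • A + c • 1 := by
  have hA := aeval_self_charpoly A
  simp only [h, map_sub, map_mul, map_pow, aeval_X, aeval_C, Algebra.algebraMap_eq_smul_one,
    smul_mul_assoc, one_mul] at hA
  rw [← sub_eq_zero, ← hA]
  abel

theorem trace_pow_add_three_of_pow_three_eq {A : Matrix n n R} {a b c : R}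
    (h : A ^ 3 = a • A ^ 2 + b • A + c • 1) (m : ℕ) :
    trace (A ^ (m + 3)) =
      a * trace (A ^ (m + 2)) + b * trace (A ^ (m + 1)) + c * trace (A ^ m) := by
  rw [pow_add, h, pow_add, pow_add, pow_one]
  simp only [mul_add, Matrix.mul_smul, Matrix.mul_one, trace_add, trace_smul, smul_eq_mul]

end

theorem det_smul_one_sub_T3 (ξ ω lam : ℂ) :
    det (lam • (1 : Matrix (Fin 3) (Fin 3) ℂ) - T3 ξ ω) =
      lam ^ 3 - (1 + 3 * ξ * ω) * lam ^ 2
        - (ξ + ω + ξ * ω * (1 - 3 * ξ * ω)) * lam - ξ * ω * (1 - ξ * ω) ^ 2 := by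
  simp only [T3, det_fin_three, Matrix.sub_apply, Matrix.smul_apply, one_apply_eq, one_apply_ne,
    of_apply, cons_val', cons_val_zero, cons_val_one, cons_val, cons_val_fin_one, Fin.reduceEq,
    ne_eq, not_false_eq_true, smul_eq_mul, mul_one, mul_zero]
  ring

theorem charpoly_T3 (ξ ω : ℂ) :
    (T3 ξ ω).charpoly = X ^ 3 - C (1 + 3 * ξ * ω) * X ^ 2
      - C (ξ + ω + ξ * ω * (1 - 3 * ξ * ω)) * X - C (ξ * ω * (1 - ξ * ω) ^ 2) := by
  refine Polynomial.funext fun lam => ?_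
  rw [eval_charpoly, scalar_apply, ← smul_one_eq_diagonal, det_smul_one_sub_T3]
  simp

/-- Characteristic polynomial of the Rule 54 Gibbs transfer matrix, and the resulting
linear recurrence for the partition sums `Z_{2k} = trace (T(ξ,ω)^k)`. -/
theorem transfer_matrix_charpoly_and_recurrence (ξ ω : ℂ) :
    (∀ lam : ℂ,
      Matrix.det (lam • (1 : Matrix (Fin 3) (Fin 3) ℂ) - T3 ξ ω) =
        lam ^ 3 - (1 + 3 * ξ * ω) * lam ^ 2
          - (ξ + ω + ξ * ω * (1 - 3 * ξ * ω)) * lam - ξ * ω * (1 - ξ * ω) ^ 2) ∧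
    (∀ k : ℕ, 2 ≤ k →
      Matrix.trace (T3 ξ ω ^ (k + 1)) =
        (1 + 3 * ξ * ω) * Matrix.trace (T3 ξ ω ^ k)
          + (ξ + ω + ξ * ω * (1 - 3 * ξ * ω)) * Matrix.trace (T3 ξ ω ^ (k - 1))
          + ξ * ω * (ξ * ω - 1) ^ 2 * Matrix.trace (T3 ξ ω ^ (k - 2))) := by
  refine ⟨det_smul_one_sub_T3 ξ ω, fun k hk => ?_⟩
  obtain ⟨m, rfl⟩ := Nat.exists_eq_add_of_le' hk
  rw [sub_sq_comm]
  have hcubic := pow_three_eq_of_charpoly_eq (charpoly_T3 ξ ω)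
  simpa [add_assoc] using trace_pow_add_three_of_pow_three_eq hcubic m

end Rule54
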